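/- arXiv:1409.0406 — 4 statements merged into one kernel-verified Lean document; each statement's English description precedes it below -/
import Mathlib

section
/- Let A, L, R be N×N complex matrices with L and R diagonal, and suppose LA − AR = |ℓ⟩⟨a| for a column vector |ℓ⟩ and row vector ⟨a|. Let ζ ∈ ℂ be such that ζ − R and 1 + A are invertible, and set H_ζ = (ζ − L)(ζ − R)⁻¹. Then det(1 + A·H_ζ) = det(1 + A)·(1 + ⟨a|(R − ζ)⁻¹(1 + A)⁻¹|ℓ⟩). -/
/-!
Since `L` and `R` commute, `H_ζ = (ζ - R)⁻¹ (ζ - L)`, and `det (1 + A H_ζ) = det (1 + H_ζ A)`.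
The Sylvester condition turns `(ζ - L) A` into `A (ζ - R) - |ℓ⟩⟨a|`, so
`1 + H_ζ A = (ζ - R)⁻¹ ((1 + A)(ζ - R) - |ℓ⟩⟨a|)`, and the matrix determinant lemma for
this rank-one perturbation of `(1 + A)(ζ - R)` gives the formula.
-/

open Matrix

namespace Matrix

variable {n α : Type*} [DecidableEq n] [CommRing α]

theorem smul_one_sub_diagonal (ζ : α) (d : n → α) :
    ζ • 1 - diagonal d = diagonal fun k => ζ - d k := by
  rw [smul_one_eq_diagonal, diagonal_sub]

variable [Fintype n]

theorem inv_diagonal_of_ne_zero {K : Type*} [Field K] {d : n → K} (hd : ∀ k, d k ≠ 0) :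
    (diagonal d)⁻¹ = diagonal fun k => (d k)⁻¹ :=
  inv_eq_left_inv <| by
    rw [diagonal_mul_diagonal, ← diagonal_one]
    exact congrArg diagonal (funext fun k => inv_mul_cancel₀ (hd k))

theorem det_one_sub_vecMulVec (u v : n → α) : det (1 - vecMulVec u v) = 1 - v ⬝ᵥ u := by
  rw [sub_eq_add_neg, ← neg_vecMulVec, vecMulVec_eq Unit,
    det_one_add_replicateCol_mul_replicateRow, dotProduct_neg, sub_eq_add_neg]

theorem det_sub_vecMulVec {M : Matrix n n α} (hM : IsUnit M.det) (u v : n → α) :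
    det (M - vecMulVec u v) = det M * (1 - v ⬝ᵥ M⁻¹ *ᵥ u) := by
  have hfactor : M - vecMulVec u v = M * (1 - vecMulVec (M⁻¹ *ᵥ u) v) := by
    rw [mul_sub, mul_one, mul_vecMulVec, mulVec_mulVec, mul_nonsing_inv M hM, one_mulVec]
  rw [hfactor, det_mul, det_one_sub_vecMulVec]

section Sylvester

variable {L A R : Matrix n n α} {ℓ a : n → α}

theorem smul_one_sub_mul_eq_of_sub_eq_vecMulVec (hrank : L * A - A * R = vecMulVec ℓ a)
    (ζ : α) : (ζ • 1 - L) * A = A * (ζ • 1 - R) - vecMulVec ℓ a := by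
  rw [← hrank, sub_mul, mul_sub, Matrix.smul_mul, Matrix.mul_smul, one_mul, mul_one]
  abel

theorem det_one_add_mul_shift (hrank : L * A - A * R = vecMulVec ℓ a) (hLR : Commute L R)
    (ζ : α) (hR : IsUnit (ζ • 1 - R).det) (hA : IsUnit (1 + A).det) :
    det (1 + A * ((ζ • 1 - L) * (ζ • 1 - R)⁻¹))
      = det (1 + A) * (1 - a ⬝ᵥ ((ζ • 1 - R)⁻¹ * (1 + A)⁻¹) *ᵥ ℓ) := by
  set X := ζ • (1 : Matrix n n α) - L
  set D := ζ • (1 : Matrix n n α) - R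
  have hXD : Commute X D :=
    ((Commute.one_left _).smul_left ζ).sub_left
      (((Commute.one_right L).smul_right ζ).sub_right hLR)
  have hXD_inv : Commute X D⁻¹ := by
    have hD : IsUnit D := (isUnit_iff_isUnit_det D).2 hR
    simpa only [hD.unit_spec, coe_units_inv] using hXD.units_inv_right (u := hD.unit)
  calc det (1 + A * (X * D⁻¹))
      = det (1 + D⁻¹ * (X * A)) := by rw [hXD_inv.eq, det_one_add_mul_comm, Matrix.mul_assoc]
    _ = det (D⁻¹ * ((1 + A) * D - vecMulVec ℓ a)) := by
      rw [smul_one_sub_mul_eq_of_sub_eq_vecMulVec hrank, Matrix.add_mul, Matrix.one_mul,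
        add_sub_assoc, Matrix.mul_add, nonsing_inv_mul D hR]
    _ = det D⁻¹ * det ((1 + A) * D) * (1 - a ⬝ᵥ ((1 + A) * D)⁻¹ *ᵥ ℓ) := by
      rw [det_mul, det_sub_vecMulVec (by rw [det_mul]; exact hA.mul hR), mul_assoc]
    _ = det (1 + A) * (1 - a ⬝ᵥ (D⁻¹ * (1 + A)⁻¹) *ᵥ ℓ) := by
      rw [mul_inv_rev, det_mul, mul_left_comm, mul_assoc, det_nonsing_inv_mul_det D hR, one_mul]

end Sylvester

end Matrix

theorem stmt_0 {N : ℕ} (A : Matrix (Fin N) (Fin N) ℂ) (l r ℓ a : Fin N → ℂ) (ζ : ℂ)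
    (hrank : Matrix.diagonal l * A - A * Matrix.diagonal r = Matrix.vecMulVec ℓ a)
    (hζR : ∀ k, ζ - r k ≠ 0)
    (hA : IsUnit (1 + A).det) :
    (1 + A * Matrix.diagonal (fun k => (ζ - l k) * (ζ - r k)⁻¹)).det
      = (1 + A).det *
        (1 + a ⬝ᵥ (Matrix.diagonal (fun k => (r k - ζ)⁻¹) * (1 + A)⁻¹).mulVec ℓ) := by
  have hsub : ζ • 1 - diagonal r = diagonal fun k => ζ - r k := smul_one_sub_diagonal ζ r
  have hsub_inv : (ζ • 1 - diagonal r)⁻¹ = diagonal fun k => (ζ - r k)⁻¹ := by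
    rw [hsub, inv_diagonal_of_ne_zero hζR]
  have hsub_unit : IsUnit (ζ • 1 - diagonal r).det := by
    rw [hsub, det_diagonal]
    exact isUnit_iff_ne_zero.2 (Finset.prod_ne_zero_iff.2 fun k _ => hζR k)
  have hshift := det_one_add_mul_shift hrank (commute_diagonal l r) ζ hsub_unit hA
  have hneg : (diagonal fun k => (r k - ζ)⁻¹) = -diagonal fun k => (ζ - r k)⁻¹ := by
    simp only [diagonal_neg, ← inv_neg, neg_sub]
  rw [hsub_inv, smul_one_sub_diagonal, diagonal_mul_diagonal] at hshift
  rw [hshift, hneg, Matrix.neg_mul, neg_mulVec, dotProduct_neg, sub_eq_add_neg]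
end

section
/- Let Ξ and H be finite sets of complex numbers with the elements of H pairwise distinct and |Ξ| < |H|, and let L, R be diagonal complex matrices such that all matrices (ζ−R) for ζ ∈ H are invertible and all H_ξ = (ξ−L)(ξ−R)⁻¹ for ξ ∈ Ξ∪H are defined and invertible. Then Σ_{ζ∈H} Γ_ζ(Ξ,H)·[H_Ξ H_H⁻¹ (R−ζ)⁻¹ − (L−ζ)⁻¹] = 0, where H_Ξ = ∏_{ξ∈Ξ} H_ξ, H_H = ∏_{η∈H} H_η, and Γ_ζ(Ξ,H) = ∏_{ξ∈Ξ}(ζ−ξ)/∏_{η∈H,η≠ζ}(ζ−η). -/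
/-!
Everything is diagonal, so the identity holds entry by entry. With `P_S(t) = ∏_{s ∈ S} (t - s)`,
Lagrange interpolation of `P_Ξ` (of degree `< |H|`) on the nodes `H`, in barycentric form, gives the
partial-fraction expansion `∑_{ζ ∈ H} Γ_ζ / (t - ζ) = P_Ξ(t) / P_H(t)`. At `t = R_k` and `t = L_k` the
claim becomes `(H_Ξ)_k / (H_H)_k · P_Ξ(R_k) / P_H(R_k) = P_Ξ(L_k) / P_H(L_k)`, which follows from
`(H_S)_k · P_S(R_k) = P_S(L_k)`.
-/

open Matrix

/-- The diagonal shift matrix `H_Ξ = ∏_{ξ∈Ξ} (ξ−L)(ξ−R)⁻¹` for diagonal `L, R`. -/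
noncomputable def Hmat {N : ℕ} (l r : Fin N → ℂ) (Ξ : Multiset ℂ) :
    Matrix (Fin N) (Fin N) ℂ :=
  Matrix.diagonal (fun k => (Ξ.map (fun ξ => (ξ - l k) * (ξ - r k)⁻¹)).prod)

open Finset Polynomial

section Field

variable {F : Type*} [Field F]

/-- The coefficient `Γ_ζ(Ξ, H)`. -/
def gammaCoeff [DecidableEq F] (Ξ : Multiset F) (H : Finset F) (ζ : F) : F :=
  (Ξ.map fun ξ => ζ - ξ).prod / ∏ η ∈ H.erase ζ, (ζ - η)

/-- The entry of the diagonal matrix `H_S` at an index `k` with `L_k = a`, `R_k = b`. -/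
def shiftProd (S : Multiset F) (a b : F) : F :=
  (S.map fun ξ => (ξ - a) * (ξ - b)⁻¹).prod

theorem sum_gammaCoeff_mul_inv_sub [DecidableEq F] {Ξ : Multiset F} {H : Finset F}
    (hcard : Ξ.card < #H) {t : F} (ht : t ∉ H) :
    ∑ ζ ∈ H, gammaCoeff Ξ H ζ * (t - ζ)⁻¹ = (Ξ.map fun ξ => t - ξ).prod / ∏ η ∈ H, (t - η) := by
  have ht' : ∀ η ∈ H, t ≠ η := fun η hη => ne_of_mem_of_not_mem hη ht |>.symm
  set P : F[X] := (Ξ.map fun ξ => X - C ξ).prod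
  have hP : ∀ s, P.eval s = (Ξ.map fun ξ => s - ξ).prod := by
    simp [P, eval_multiset_prod]
  have hdeg : P.degree < #H := by
    refine degree_le_natDegree.trans_lt ?_
    rw [natDegree_multiset_prod_X_sub_C_eq_card]
    exact_mod_cast hcard
  have hinterp := congrArg (eval t) (Lagrange.eq_interpolate (v := id) (Set.injOn_id _) hdeg)
  rw [Lagrange.eval_interpolate_not_at_node (v := id) _ ht', Lagrange.eval_nodal, hP] at hinterp
  rw [eq_div_iff (prod_ne_zero_iff.2 fun η hη => sub_ne_zero.2 (ht' η hη)), hinterp, mul_comm]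
  refine congrArg _ (sum_congr rfl fun ζ _ => ?_)
  simp only [gammaCoeff, div_eq_mul_inv, Lagrange.nodalWeight, id_eq, prod_inv_distrib, hP]
  ring

theorem shiftProd_mul_prod_sub {S : Multiset F} (a : F) {b : F} (hb : b ∉ S) :
    shiftProd S a b * (S.map fun ξ => b - ξ).prod = (S.map fun ξ => a - ξ).prod := by
  rw [shiftProd, ← Multiset.prod_map_mul]
  refine congrArg _ (Multiset.map_congr rfl fun ξ hξ => ?_)
  field_simp [sub_ne_zero.2 (ne_of_mem_of_not_mem hξ hb)]
  ring

theorem shiftProd_ne_zero {S : Multiset F} {a b : F} (ha : a ∉ S) (hb : b ∉ S) :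
    shiftProd S a b ≠ 0 :=
  Multiset.prod_ne_zero fun h0 => by
    obtain ⟨ξ, hξ, h⟩ := Multiset.mem_map.1 h0
    exact mul_ne_zero (sub_ne_zero.2 (ne_of_mem_of_not_mem hξ ha))
      (inv_ne_zero (sub_ne_zero.2 (ne_of_mem_of_not_mem hξ hb))) h

theorem sum_gammaCoeff_mul_shiftProd_sub [DecidableEq F] {Ξ : Multiset F} {H : Finset F}
    (hcard : Ξ.card < #H) {a b : F} (hΞb : b ∉ Ξ) (hHa : a ∉ H) (hHb : b ∉ H) :
    ∑ ζ ∈ H, gammaCoeff Ξ H ζ * (shiftProd Ξ a b / shiftProd H.val a b * (b - ζ)⁻¹ - (a - ζ)⁻¹)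
      = 0 := by
  simp only [mul_sub, sum_sub_distrib, mul_left_comm (gammaCoeff Ξ H _), ← mul_sum,
    sum_gammaCoeff_mul_inv_sub hcard hHa, sum_gammaCoeff_mul_inv_sub hcard hHb]
  have hΞ := shiftProd_mul_prod_sub a hΞb
  have hH : shiftProd H.val a b * ∏ η ∈ H, (b - η) = ∏ η ∈ H, (a - η) :=
    shiftProd_mul_prod_sub a hHb
  have hHne := shiftProd_ne_zero hHa hHb
  rw [sub_eq_zero, ← hΞ, ← hH]
  field_simp

end Field

theorem Matrix.sum_smul_diagonal {ι n α : Type*} [DecidableEq n] [Semiring α] (s : Finset ι)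
    (c : ι → α) (d : ι → n → α) :
    ∑ i ∈ s, c i • diagonal (d i) = diagonal fun k => ∑ i ∈ s, c i * d i k := by
  ext j k
  rcases eq_or_ne j k with rfl | hjk
  · simp [Matrix.sum_apply]
  · simp [Matrix.sum_apply, diagonal_apply_ne _ hjk]

theorem Hmat_eq_diagonal {N : ℕ} (l r : Fin N → ℂ) (S : Multiset ℂ) :
    Hmat l r S = diagonal fun k => shiftProd S (l k) (r k) := rfl

theorem stmt_5_general {N : ℕ} (l r : Fin N → ℂ) (Ξ : Multiset ℂ) (H : Finset ℂ)
    (hcard : Ξ.card < H.card)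
    (hΞr : ∀ ξ ∈ Ξ, ∀ k, ξ - r k ≠ 0)
    (hHr : ∀ η ∈ H, ∀ k, η - r k ≠ 0)
    (hHl : ∀ η ∈ H, ∀ k, η - l k ≠ 0) :
    ∑ ζ ∈ H, ((Ξ.map (fun ξ => ζ - ξ)).prod / ∏ η ∈ H.erase ζ, (ζ - η)) •
        (Hmat l r Ξ * (Hmat l r H.val)⁻¹ * Matrix.diagonal (fun k => (r k - ζ)⁻¹)
          - Matrix.diagonal (fun k => (l k - ζ)⁻¹))
      = 0 := by
  have notMem {S : Multiset ℂ} {t : ℂ} (h : ∀ ξ ∈ S, ξ - t ≠ 0) : t ∉ S :=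
    fun ht => h t ht (sub_self t)
  have hHne k : shiftProd H.val (l k) (r k) ≠ 0 :=
    shiftProd_ne_zero (notMem (hHl · · k)) (notMem (hHr · · k))
  have hinv : (Hmat l r H.val)⁻¹ = diagonal fun k => (shiftProd H.val (l k) (r k))⁻¹ := by
    refine inv_eq_right_inv ?_
    rw [Hmat_eq_diagonal, diagonal_mul_diagonal, ← diagonal_one]
    exact congrArg diagonal (funext fun k => mul_inv_cancel₀ (hHne k))
  rw [hinv, Hmat_eq_diagonal]
  simp only [diagonal_mul_diagonal, diagonal_sub, sum_smul_diagonal, ← diagonal_zero]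
  exact congrArg diagonal <| funext fun k => sum_gammaCoeff_mul_shiftProd_sub hcard
    (notMem (hΞr · · k)) (notMem (hHl · · k)) (notMem (hHr · · k))

theorem stmt_5 {N : ℕ} (l r : Fin N → ℂ) (Ξ : Multiset ℂ) (H : Finset ℂ)
    (hcard : Ξ.card < H.card)
    (hΞr : ∀ ξ ∈ Ξ, ∀ k, ξ - r k ≠ 0)
    (hΞl : ∀ ξ ∈ Ξ, ∀ k, ξ - l k ≠ 0)
    (hHr : ∀ η ∈ H, ∀ k, η - r k ≠ 0)
    (hHl : ∀ η ∈ H, ∀ k, η - l k ≠ 0) :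
    ∑ ζ ∈ H, ((Ξ.map (fun ξ => ζ - ξ)).prod / ∏ η ∈ H.erase ζ, (ζ - η)) •
        (Hmat l r Ξ * (Hmat l r H.val)⁻¹ * Matrix.diagonal (fun k => (r k - ζ)⁻¹)
          - Matrix.diagonal (fun k => (l k - ζ)⁻¹))
      = 0 :=
  stmt_5_general l r Ξ H hcard hΞr hHr hHl
end

section
/- (Two-shift Fay / quadrilateral identity.) Let A, L, R satisfy LA − AR = |ℓ⟩⟨a| with L, R diagonal, and let ξ, η, ζ be three pairwise distinct complex numbers with all shifts well-defined. Then (ζ−η)·Ω[{ξ}]·Ω[{η,ζ}] + (η−ξ)·Ω[{ζ}]·Ω[{ξ,η}] + (ξ−ζ)·Ω[{η}]·Ω[{ζ,ξ}] = 0. -/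
open Matrix

/-- Shifted dark-soliton determinant `Ω[S] = det(1 + A ∏_{s∈S}(s−L)(s−R)⁻¹)`. -/
noncomputable def Omega {N : ℕ} (A : Matrix (Fin N) (Fin N) ℂ) (l r : Fin N → ℂ)
    (S : Multiset ℂ) : ℂ :=
  (1 + A * Matrix.diagonal (fun k => (S.map (fun s => (s - l k) * (s - r k)⁻¹)).prod)).det

/-!
Using the displacement equation `LA - AR = ℓ aᵀ`, multiplying `Ω[{s}]` by `det (s - R)` and
`Ω[{s,t}]` by `det ((s - R)(t - R))` turns them into determinants of `B (s - R)` and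
`B (s - R)(t - R)`, with `B = 1 + A`, perturbed by matrices of rank one and two.
If `B` is invertible, the matrix determinant lemma expresses these through the resolvent forms
`⟨a| (s - R)⁻¹ B⁻¹ |ℓ⟩` and `⟨a| (s - R)⁻¹ B⁻¹ |Lℓ⟩`; after partial fractions in `s, t` the Fay
identity becomes a rational identity in these six numbers. For singular `B` one applies the
invertible case to `X + B` over `K(X)` and evaluates at `X = 0`.
-/

namespace Matrix

variable {n : Type*} [Fintype n] [DecidableEq n] {R : Type*} [CommRing R]

theorem mul_add_vecMulVec_nonsing_inv_mulVec {B : Matrix n n R} (hB : IsUnit B.det)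
    (M : Matrix n n R) (u y : n → R) :
    B * (M + vecMulVec (B⁻¹ *ᵥ u) y) = B * M + vecMulVec u y := by
  rw [Matrix.mul_add, mul_vecMulVec, mulVec_mulVec, mul_nonsing_inv _ hB, one_mulVec]

theorem det_one_add_mul_diagonal_mul_prod (A : Matrix n n R) {d e E : n → R}
    (h : ∀ k, E k * d k = e k) :
    (1 + A * diagonal d).det * ∏ k, E k = (diagonal E + diagonal e * A).det := by
  rw [← det_diagonal, det_one_add_mul_comm, mul_comm, ← det_mul, Matrix.mul_add, Matrix.mul_one,
    ← Matrix.mul_assoc, diagonal_mul_diagonal, funext h]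

theorem apply_of_displacement_eq_vecMulVec {A : Matrix n n R} {l r ℓ a : n → R}
    (hrank : diagonal l * A - A * diagonal r = vecMulVec ℓ a) (i j : n) :
    l i * A i j - A i j * r j = ℓ i * a j := by
  simpa [diagonal_mul, mul_diagonal, vecMulVec_apply] using congrFun (congrFun hrank i) j

variable {K : Type*} [Field K]

theorem diagonal_add_eq_diagonal_mul (d : n → K) (hd : ∀ k, d k ≠ 0) (M : Matrix n n K) :
    diagonal d + M = diagonal d * (1 + diagonal (fun k => (d k)⁻¹) * M) := by
  rw [Matrix.mul_add, Matrix.mul_one, ← Matrix.mul_assoc, diagonal_mul_diagonal]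
  simp [mul_inv_cancel₀ (hd _)]

theorem det_diagonal_add_vecMulVec (d x y : n → K) (hd : ∀ k, d k ≠ 0) :
    (diagonal d + vecMulVec x y).det = (∏ k, d k) * (1 + ∑ k, y k * x k / d k) := by
  rw [diagonal_add_eq_diagonal_mul d hd, det_mul, det_diagonal, mul_vecMulVec,
    vecMulVec_eq Unit, det_one_add_replicateCol_mul_replicateRow]
  simp only [dotProduct, mulVec_diagonal]
  congr 2
  exact Finset.sum_congr rfl fun k _ => by ring

theorem det_diagonal_add_vecMulVec_add_vecMulVec (d x₁ y₁ x₂ y₂ : n → K) (hd : ∀ k, d k ≠ 0) :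
    (diagonal d + vecMulVec x₁ y₁ + vecMulVec x₂ y₂).det =
      (∏ k, d k) * ((1 + ∑ k, y₁ k * x₁ k / d k) * (1 + ∑ k, y₂ k * x₂ k / d k)
        - (∑ k, y₁ k * x₂ k / d k) * ∑ k, y₂ k * x₁ k / d k) := by
  let U : Matrix n (Fin 2) K := of fun k => ![x₁ k, x₂ k]
  let V : Matrix (Fin 2) n K := of ![y₁, y₂]
  have hUV : vecMulVec x₁ y₁ + vecMulVec x₂ y₂ = U * V := by
    ext i j; simp [U, V, mul_apply, Fin.sum_univ_two, vecMulVec_apply]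
  have hsum (y x : n → K) : ∑ k, y k * ((d k)⁻¹ * x k) = ∑ k, y k * x k / d k :=
    Finset.sum_congr rfl fun k _ => by ring
  rw [add_assoc, hUV, diagonal_add_eq_diagonal_mul d hd, det_mul, det_diagonal,
    ← Matrix.mul_assoc, det_one_add_mul_comm, det_fin_two]
  simp only [Matrix.add_apply, one_apply_eq, one_apply_ne zero_ne_one, one_apply_ne one_ne_zero,
    mul_apply, diagonal_apply, ite_mul, zero_mul, Finset.sum_ite_eq, Finset.mem_univ, if_true,
    U, V, of_apply, cons_val_zero, cons_val_one, hsum, zero_add]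

end Matrix

namespace Fay

section CommRing

variable {n : Type*} [Fintype n] [DecidableEq n] {R S : Type*} [CommRing R] [CommRing S]

/-- `Ω[{s}]` and `Ω[{s,t}]` with denominators cleared: `B` stands for `1 + A`, `u` for `ℓ` and
`w` for `Lℓ`. -/
def clearedDet₁ (B : Matrix n n R) (r u a : n → R) (s : R) : R :=
  (B * diagonal (fun k => s - r k) - vecMulVec u a).det

def clearedDet₂ (B : Matrix n n R) (r u a w : n → R) (s t : R) : R :=
  (B * diagonal (fun k => (s - r k) * (t - r k))
    - vecMulVec u (fun k => (s + t - r k) * a k) + vecMulVec w a).det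

theorem clearedDet₁_map (f : R →+* S) (B : Matrix n n R) (r u a : n → R) (s : R) :
    clearedDet₁ (B.map f) (f ∘ r) (f ∘ u) (f ∘ a) (f s) = f (clearedDet₁ B r u a s) := by
  rw [clearedDet₁, clearedDet₁, RingHom.map_det]
  congr 1
  ext i j
  simp [mul_diagonal, vecMulVec_apply]

theorem clearedDet₂_map (f : R →+* S) (B : Matrix n n R) (r u a w : n → R) (s t : R) :
    clearedDet₂ (B.map f) (f ∘ r) (f ∘ u) (f ∘ a) (f ∘ w) (f s) (f t)
      = f (clearedDet₂ B r u a w s t) := by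
  rw [clearedDet₂, clearedDet₂, RingHom.map_det]
  congr 1
  ext i j
  simp [mul_diagonal, vecMulVec_apply]

end CommRing

section Resolvent

variable {n : Type*} [Fintype n] {K : Type*} [Field K]

def resolventForm (r x y : n → K) (s : K) : K := ∑ k, x k * y k / (s - r k)

theorem sum_div_sub_mul_sub (r x y : n → K) {s t : K} (hst : s ≠ t)
    (hs : ∀ k, s - r k ≠ 0) (ht : ∀ k, t - r k ≠ 0) :
    ∑ k, x k * y k / ((s - r k) * (t - r k))
      = (resolventForm r x y s - resolventForm r x y t) / (t - s) := by
  rw [eq_div_iff (sub_ne_zero.2 hst.symm), resolventForm, resolventForm,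
    ← Finset.sum_sub_distrib, Finset.sum_mul]
  refine Finset.sum_congr rfl fun k _ => ?_
  field_simp [hs k, ht k]
  ring

theorem sum_add_sub_mul_div_sub_mul_sub (r x y : n → K) {s t : K} (hst : s ≠ t)
    (hs : ∀ k, s - r k ≠ 0) (ht : ∀ k, t - r k ≠ 0) :
    ∑ k, (s + t - r k) * x k * y k / ((s - r k) * (t - r k))
      = (t * resolventForm r x y s - s * resolventForm r x y t) / (t - s) := by
  rw [eq_div_iff (sub_ne_zero.2 hst.symm), resolventForm, resolventForm, Finset.mul_sum,
    Finset.mul_sum, ← Finset.sum_sub_distrib, Finset.sum_mul]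
  refine Finset.sum_congr rfl fun k _ => ?_
  field_simp [hs k, ht k]
  ring

end Resolvent

section Field

variable {n : Type*} [Fintype n] [DecidableEq n] {K : Type*} [Field K]

theorem clearedDet₁_eq {B : Matrix n n K} (hB : IsUnit B.det) (r u a : n → K) {s : K}
    (hs : ∀ k, s - r k ≠ 0) :
    clearedDet₁ B r u a s = B.det * (∏ k, (s - r k)) * (1 - resolventForm r a (B⁻¹ *ᵥ u) s) := by
  rw [clearedDet₁, sub_eq_add_neg, ← neg_vecMulVec, ← mul_add_vecMulVec_nonsing_inv_mulVec hB,
    det_mul, det_diagonal_add_vecMulVec _ _ _ hs, resolventForm]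
  simp only [mulVec_neg, Pi.neg_apply, mul_neg, neg_div, Finset.sum_neg_distrib]
  ring

/-- `(t - s)²` times the `2 × 2` determinant produced by the rank-two determinant lemma for
`clearedDet₂`, after partial fractions, in terms of `F = ⟨a| (· - R)⁻¹ B⁻¹ |u⟩` and
`G = ⟨a| (· - R)⁻¹ B⁻¹ |w⟩`. -/
def twoShiftNumerator (F G : K → K) (s t : K) : K :=
  ((t - s) - t * F s + s * F t) * ((t - s) + G s - G t) + (t * G s - s * G t) * (F s - F t)

theorem clearedDet₂_eq {B : Matrix n n K} (hB : IsUnit B.det) (r u a w : n → K) {s t : K}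
    (hst : s ≠ t) (hs : ∀ k, s - r k ≠ 0) (ht : ∀ k, t - r k ≠ 0) :
    clearedDet₂ B r u a w s t = B.det * ((∏ k, (s - r k)) * ∏ k, (t - r k)) *
      twoShiftNumerator (resolventForm r a (B⁻¹ *ᵥ u)) (resolventForm r a (B⁻¹ *ᵥ w)) s t
        / (t - s) ^ 2 := by
  rw [clearedDet₂, sub_eq_add_neg, ← neg_vecMulVec, ← mul_add_vecMulVec_nonsing_inv_mulVec hB,
    ← mul_add_vecMulVec_nonsing_inv_mulVec hB, det_mul,
    det_diagonal_add_vecMulVec_add_vecMulVec _ _ _ _ _ fun k => mul_ne_zero (hs k) (ht k),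
    Finset.prod_mul_distrib, twoShiftNumerator]
  simp only [mulVec_neg, Pi.neg_apply, mul_neg, neg_div, Finset.sum_neg_distrib,
    sum_div_sub_mul_sub r a _ hst hs ht, sum_add_sub_mul_div_sub_mul_sub r a _ hst hs ht]
  have hts : t - s ≠ 0 := sub_ne_zero.2 hst.symm
  field_simp
  ring

theorem fay_clearedDet_of_isUnit {B : Matrix n n K} (hB : IsUnit B.det) (r u a w : n → K)
    {ξ η ζ : K} (hξη : ξ ≠ η) (hηζ : η ≠ ζ) (hζξ : ζ ≠ ξ)
    (hξ : ∀ k, ξ - r k ≠ 0) (hη : ∀ k, η - r k ≠ 0) (hζ : ∀ k, ζ - r k ≠ 0) :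
    (ζ - η) * clearedDet₁ B r u a ξ * clearedDet₂ B r u a w η ζ
      + (η - ξ) * clearedDet₁ B r u a ζ * clearedDet₂ B r u a w ξ η
      + (ξ - ζ) * clearedDet₁ B r u a η * clearedDet₂ B r u a w ζ ξ = 0 := by
  rw [clearedDet₁_eq hB r u a hξ, clearedDet₁_eq hB r u a hη, clearedDet₁_eq hB r u a hζ,
    clearedDet₂_eq hB r u a w hηζ hη hζ, clearedDet₂_eq hB r u a w hξη hξ hη,
    clearedDet₂_eq hB r u a w hζξ hζ hξ]
  have h₁ : ζ - η ≠ 0 := sub_ne_zero.2 hηζ.symm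
  have h₂ : η - ξ ≠ 0 := sub_ne_zero.2 hξη.symm
  have h₃ : ξ - ζ ≠ 0 := sub_ne_zero.2 hζξ.symm
  field_simp
  simp only [twoShiftNumerator]
  ring

open Polynomial in
theorem fay_clearedDet (B : Matrix n n K) (r u a w : n → K)
    {ξ η ζ : K} (hξη : ξ ≠ η) (hηζ : η ≠ ζ) (hζξ : ζ ≠ ξ)
    (hξ : ∀ k, ξ - r k ≠ 0) (hη : ∀ k, η - r k ≠ 0) (hζ : ∀ k, ζ - r k ≠ 0) :
    (ζ - η) * clearedDet₁ B r u a ξ * clearedDet₂ B r u a w η ζ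
      + (η - ξ) * clearedDet₁ B r u a ζ * clearedDet₂ B r u a w ξ η
      + (ξ - ζ) * clearedDet₁ B r u a η * clearedDet₂ B r u a w ζ ξ = 0 := by
  let φ : K[X] →+* FractionRing K[X] := algebraMap _ _
  have hφ : Function.Injective φ := IsFractionRing.injective _ _
  -- `charmatrix (-B) = X • 1 + B`
  have hgeneric : (C ζ - C η) * clearedDet₁ (charmatrix (-B)) (C ∘ r) (C ∘ u) (C ∘ a) (C ξ)
        * clearedDet₂ (charmatrix (-B)) (C ∘ r) (C ∘ u) (C ∘ a) (C ∘ w) (C η) (C ζ)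
      + (C η - C ξ) * clearedDet₁ (charmatrix (-B)) (C ∘ r) (C ∘ u) (C ∘ a) (C ζ)
        * clearedDet₂ (charmatrix (-B)) (C ∘ r) (C ∘ u) (C ∘ a) (C ∘ w) (C ξ) (C η)
      + (C ξ - C ζ) * clearedDet₁ (charmatrix (-B)) (C ∘ r) (C ∘ u) (C ∘ a) (C η)
        * clearedDet₂ (charmatrix (-B)) (C ∘ r) (C ∘ u) (C ∘ a) (C ∘ w) (C ζ) (C ξ) = 0 := by
    apply hφ
    simp only [map_zero, map_add, map_mul, map_sub, ← clearedDet₁_map, ← clearedDet₂_map]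
    have hunit : IsUnit ((charmatrix (-B)).map φ).det := by
      rw [← RingHom.mapMatrix_apply, ← RingHom.map_det, isUnit_iff_ne_zero, map_ne_zero_iff _ hφ]
      exact (charpoly_monic (-B)).ne_zero
    have hne {x y : K} (h : x ≠ y) : φ (C x) ≠ φ (C y) := (φ.comp C).injective.ne h
    have hsub {x : K} (h : ∀ k, x - r k ≠ 0) (k : n) : φ (C x) - (φ ∘ (C ∘ r)) k ≠ 0 := by
      simpa [← map_sub] using (map_ne_zero (φ.comp C)).2 (h k)
    exact fay_clearedDet_of_isUnit hunit _ _ _ _ (hne hξη) (hne hηζ) (hne hζξ)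
      (hsub hξ) (hsub hη) (hsub hζ)
  have heval : (charmatrix (-B)).map (evalRingHom 0) = B := by
    ext i j
    by_cases h : i = j <;> simp [h]
  have hpt (x : K) : evalRingHom 0 (C x) = x := eval_C
  have hvec (v : n → K) : evalRingHom 0 ∘ (C ∘ v) = v := funext fun k => hpt (v k)
  simpa only [map_zero, map_add, map_mul, map_sub, ← clearedDet₁_map, ← clearedDet₂_map, heval,
    hvec, hpt] using congrArg (evalRingHom 0) hgeneric

end Field

theorem omega_singleton_mul_prod {N : ℕ} {A : Matrix (Fin N) (Fin N) ℂ} {l r ℓ a : Fin N → ℂ}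
    (hrank : diagonal l * A - A * diagonal r = vecMulVec ℓ a) {s : ℂ} (hs : ∀ k, s - r k ≠ 0) :
    Omega A l r {s} * ∏ k, (s - r k) = clearedDet₁ (1 + A) r ℓ a s := by
  simp only [Omega, Multiset.map_singleton, Multiset.prod_singleton]
  rw [det_one_add_mul_diagonal_mul_prod A (e := fun k => s - l k) fun k => by field_simp [hs k],
    clearedDet₁, Matrix.add_mul, Matrix.one_mul, add_sub_assoc]
  congr 2
  ext i j
  simp only [diagonal_mul, Matrix.sub_apply, mul_diagonal, vecMulVec_apply]
  linear_combination -apply_of_displacement_eq_vecMulVec hrank i j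

theorem omega_pair_mul_prod {N : ℕ} {A : Matrix (Fin N) (Fin N) ℂ} {l r ℓ a : Fin N → ℂ}
    (hrank : diagonal l * A - A * diagonal r = vecMulVec ℓ a) {s t : ℂ}
    (hs : ∀ k, s - r k ≠ 0) (ht : ∀ k, t - r k ≠ 0) :
    Omega A l r {s, t} * ((∏ k, (s - r k)) * ∏ k, (t - r k))
      = clearedDet₂ (1 + A) r ℓ a (l * ℓ) s t := by
  simp only [Omega, Multiset.insert_eq_cons, Multiset.map_cons, Multiset.prod_cons,
    Multiset.map_singleton, Multiset.prod_singleton]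
  rw [← Finset.prod_mul_distrib,
    det_one_add_mul_diagonal_mul_prod A (e := fun k => (s - l k) * (t - l k))
      fun k => by field_simp [hs k, ht k],
    clearedDet₂, Matrix.add_mul, Matrix.one_mul, add_sub_assoc, add_assoc]
  congr 2
  ext i j
  simp only [diagonal_mul, Matrix.add_apply, Matrix.sub_apply, mul_diagonal, vecMulVec_apply,
    Pi.mul_apply]
  linear_combination (l i + r j - s - t) * apply_of_displacement_eq_vecMulVec hrank i j

end Fay

theorem stmt_18 {N : ℕ} (A : Matrix (Fin N) (Fin N) ℂ) (l r ℓ a : Fin N → ℂ) (ξ η ζ : ℂ)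
    (hrank : Matrix.diagonal l * A - A * Matrix.diagonal r = Matrix.vecMulVec ℓ a)
    (hξη : ξ ≠ η) (hηζ : η ≠ ζ) (hζξ : ζ ≠ ξ)
    (hξr : ∀ k, ξ - r k ≠ 0) (hηr : ∀ k, η - r k ≠ 0) (hζr : ∀ k, ζ - r k ≠ 0) :
    (ζ - η) * Omega A l r {ξ} * Omega A l r {η, ζ}
      + (η - ξ) * Omega A l r {ζ} * Omega A l r {ξ, η}
      + (ξ - ζ) * Omega A l r {η} * Omega A l r {ζ, ξ} = 0 := by
  have hprod {s : ℂ} (hs : ∀ k, s - r k ≠ 0) : ∏ k, (s - r k) ≠ 0 :=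
    Finset.prod_ne_zero_iff.2 fun k _ => hs k
  have key := Fay.fay_clearedDet (1 + A) r ℓ a (l * ℓ) hξη hηζ hζξ hξr hηr hζr
  rw [← Fay.omega_singleton_mul_prod hrank hξr, ← Fay.omega_singleton_mul_prod hrank hηr,
    ← Fay.omega_singleton_mul_prod hrank hζr, ← Fay.omega_pair_mul_prod hrank hηr hζr,
    ← Fay.omega_pair_mul_prod hrank hξr hηr, ← Fay.omega_pair_mul_prod hrank hζr hξr] at key
  have hscaled : ((∏ k, (ξ - r k)) * (∏ k, (η - r k)) * ∏ k, (ζ - r k)) *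
      ((ζ - η) * Omega A l r {ξ} * Omega A l r {η, ζ}
        + (η - ξ) * Omega A l r {ζ} * Omega A l r {ξ, η}
        + (ξ - ζ) * Omega A l r {η} * Omega A l r {ζ, ξ}) = 0 := by
    linear_combination key
  exact (mul_eq_zero.1 hscaled).resolve_left
    (mul_ne_zero (mul_ne_zero (hprod hξr) (hprod hηr)) (hprod hζr))
end

section
/- (Three-term Miwa-type identity.) Let A, L, R satisfy LA − AR = |ℓ⟩⟨a| with L, R diagonal, and let ξ, η, ζ be pairwise distinct complex numbers such that all shifts exist. Then Ω[{ξ}]·Ω[{η,ζ}] = [(η−ξ)/(η−ζ)]·Ω[{ξ,η}]·Ω[{ζ}] + [(ζ−ξ)/(ζ−η)]·Ω[{ξ,ζ}]·Ω[{η}]. -/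
open Matrix

variable {N : ℕ}

lemma det_eq_of_diag_conj (B C : Matrix (Fin N) (Fin N) ℂ) (q : Fin N → ℂ)
    (hq : ∀ k, q k ≠ 0) (h : diagonal q * B = C * diagonal q) : B.det = C.det := by
  have hdq : (∏ i : Fin N, q i) ≠ 0 := Finset.prod_ne_zero_iff.mpr fun k _ => hq k
  have h2 := congrArg Matrix.det h
  rw [det_mul, det_mul, det_diagonal] at h2
  exact mul_left_cancel₀ hdq (h2.trans (mul_comm _ _))

lemma omega_single (A : Matrix (Fin N) (Fin N) ℂ) (l r ℓ a : Fin N → ℂ)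
    (hA : ∀ j k, (l j - r k) * A j k = ℓ j * a k) (μ : ℂ) (hμr : ∀ k, μ - r k ≠ 0) :
    Omega A l r {μ}
      = (1 + A + vecMulVec ℓ (fun k => -(a k * (μ - r k)⁻¹))).det := by
  have h0 : Omega A l r {μ}
      = (1 + diagonal (fun k => (μ - l k) * (μ - r k)⁻¹) * A).det := by
    rw [Omega]
    simp only [Multiset.map_singleton, Multiset.prod_singleton]
    rw [← det_one_add_mul_comm]
  rw [h0]
  apply det_eq_of_diag_conj _ _ (fun k => μ - r k) hμr
  ext j k
  simp only [Matrix.mul_apply, diagonal_apply, Matrix.add_apply, Matrix.one_apply,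
    vecMulVec_apply, Finset.sum_ite_eq, Finset.mem_univ, if_true]
  by_cases hjk : j = k
  · subst hjk
    simp
    field_simp [hμr j]
    linear_combination -hA j j
  · simp [hjk]
    field_simp [hμr j, hμr k]
    linear_combination -hA j k

lemma omega_pair (A : Matrix (Fin N) (Fin N) ℂ) (l r ℓ a : Fin N → ℂ)
    (hA : ∀ j k, (l j - r k) * A j k = ℓ j * a k) (μ ν : ℂ) (hμν : μ ≠ ν)
    (hμr : ∀ k, μ - r k ≠ 0) (hνr : ∀ k, ν - r k ≠ 0) :
    Omega A l r {μ, ν}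
      = (1 + A
          + vecMulVec (fun j => ℓ j * (l j - μ))
              (fun k => (ν - μ)⁻¹ * (a k * (μ - r k)⁻¹ - a k * (ν - r k)⁻¹))
          + vecMulVec ℓ (fun k => -(a k * (μ - r k)⁻¹))).det := by
  have hνμ : ν - μ ≠ 0 := sub_ne_zero.mpr (Ne.symm hμν)
  have h0 : Omega A l r {μ, ν}
      = (1 + diagonal (fun k => (μ - l k) * (μ - r k)⁻¹ * ((ν - l k) * (ν - r k)⁻¹)) * A).det := by
    rw [Omega]
    simp only [Multiset.insert_eq_cons, Multiset.map_cons, Multiset.map_singleton,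
      Multiset.prod_cons, Multiset.prod_singleton]
    rw [← det_one_add_mul_comm]
  rw [h0]
  apply det_eq_of_diag_conj _ _ (fun k => (μ - r k) * (ν - r k))
    (fun k => mul_ne_zero (hμr k) (hνr k))
  have hw : ∀ k', (ν - μ)⁻¹ * (a k' * (μ - r k')⁻¹ - a k' * (ν - r k')⁻¹)
      = a k' * ((μ - r k')⁻¹ * (ν - r k')⁻¹) := by
    intro k'
    field_simp [hμr k', hνr k']
    ring
  ext j k
  simp only [Matrix.diagonal_mul, Matrix.mul_diagonal, Matrix.add_apply, Matrix.one_apply,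
    Matrix.vecMulVec_apply, hw]
  have hL : (μ - r j) * (ν - r j) * ((μ - l j) * (μ - r j)⁻¹ * ((ν - l j) * (ν - r j)⁻¹) * A j k)
      = (μ - l j) * (ν - l j) * A j k := by
    field_simp [hμr j, hνr j]
  have e1 : ∀ k', ℓ j * (l j - μ) * (a k' * ((μ - r k')⁻¹ * (ν - r k')⁻¹)) * ((μ - r k') * (ν - r k'))
      = ℓ j * (l j - μ) * a k' := by
    intro k'; field_simp [hμr k', hνr k']; try ring
  have e2 : ∀ k', ℓ j * -(a k' * (μ - r k')⁻¹) * ((μ - r k') * (ν - r k'))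
      = -(ℓ j * a k' * (ν - r k')) := by
    intro k'; field_simp [hμr k']; try ring
  by_cases hjk : j = k
  · subst hjk
    rw [mul_add, hL, if_pos rfl]
    linear_combination (l j + r j - μ - ν) * hA j j - e1 j - e2 j
  · rw [mul_add, hL, if_neg hjk]
    linear_combination (l j + r k - μ - ν) * hA j k - e1 k - e2 k

lemma rank2_det {N : ℕ} (G : Matrix (Fin N) (Fin N) ℂ) (hG : IsUnit G.det)
    (u₁ u₂ w₁ w₂ : Fin N → ℂ) :
    (G + vecMulVec u₁ w₁ + vecMulVec u₂ w₂).det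
      = G.det * ((1 + w₁ ⬝ᵥ G⁻¹ *ᵥ u₁) * (1 + w₂ ⬝ᵥ G⁻¹ *ᵥ u₂)
          - (w₁ ⬝ᵥ G⁻¹ *ᵥ u₂) * (w₂ ⬝ᵥ G⁻¹ *ᵥ u₁)) := by
  set U : Matrix (Fin N) (Fin 2) ℂ := Matrix.of fun j i => ![u₁ j, u₂ j] i with hU
  set W : Matrix (Fin 2) (Fin N) ℂ := Matrix.of fun i k => ![w₁, w₂] i k with hW
  have hUW : U * W = vecMulVec u₁ w₁ + vecMulVec u₂ w₂ := by
    ext j k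
    simp [hU, hW, Matrix.mul_apply, Fin.sum_univ_two, vecMulVec_apply]
  have h1 : G + vecMulVec u₁ w₁ + vecMulVec u₂ w₂ = G * (1 + G⁻¹ * (U * W)) := by
    rw [Matrix.mul_add, mul_one, ← Matrix.mul_assoc, Matrix.mul_nonsing_inv _ hG,
      Matrix.one_mul, hUW, add_assoc]
  rw [h1, det_mul]
  congr 1
  rw [← Matrix.mul_assoc G⁻¹ U W, det_one_add_mul_comm]
  rw [det_fin_two]
  have he : ∀ i j, (W * (G⁻¹ * U)) i j
      = (![w₁, w₂] i) ⬝ᵥ G⁻¹ *ᵥ (![u₁, u₂] j) := by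
    intro i j
    fin_cases i <;> fin_cases j <;>
      simp [hW, hU, Matrix.mul_apply, mulVec, dotProduct, Finset.mul_sum, mul_assoc]
  simp only [Matrix.add_apply, Matrix.one_apply, he]
  norm_num
  try ring

lemma rank1_det {N : ℕ} (G : Matrix (Fin N) (Fin N) ℂ) (hG : IsUnit G.det)
    (u w : Fin N → ℂ) :
    (G + vecMulVec u w).det = G.det * (1 + w ⬝ᵥ G⁻¹ *ᵥ u) := by
  have h0 : vecMulVec (0 : Fin N → ℂ) (0 : Fin N → ℂ) = 0 := by
    ext j k; simp [vecMulVec_apply]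
  have := rank2_det G hG u 0 w 0
  rw [h0, add_zero] at this
  rw [this]
  simp [Matrix.mulVec_zero, dotProduct_zero, zero_dotProduct]

lemma fay_generic (A : Matrix (Fin N) (Fin N) ℂ) (l r ℓ a : Fin N → ℂ) (ξ η ζ : ℂ)
    (hA : ∀ j k, (l j - r k) * A j k = ℓ j * a k)
    (hξη : ξ ≠ η) (hηζ : η ≠ ζ) (hζξ : ζ ≠ ξ)
    (hξr : ∀ k, ξ - r k ≠ 0) (hηr : ∀ k, η - r k ≠ 0) (hζr : ∀ k, ζ - r k ≠ 0)
    (hG : IsUnit (1 + A).det) :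
    (η - ζ) * (ζ - η) * (Omega A l r {ξ} * Omega A l r {η, ζ})
      = (η - ξ) * (ζ - η) * (Omega A l r {ξ, η} * Omega A l r {ζ})
        + (ζ - ξ) * (η - ζ) * (Omega A l r {ξ, ζ} * Omega A l r {η}) := by
  set G : Matrix (Fin N) (Fin N) ℂ := 1 + A with hGdef
  -- scalar building blocks
  set X : ℂ → ℂ := fun μ => (fun k => a k * (μ - r k)⁻¹) ⬝ᵥ G⁻¹ *ᵥ ℓ with hX
  set Y : ℂ → ℂ := fun μ => (fun k => a k * (μ - r k)⁻¹) ⬝ᵥ G⁻¹ *ᵥ (fun j => l j * ℓ j) with hY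
  -- dot-product linearity helpers
  have hneg : ∀ (μ : ℂ) (v : Fin N → ℂ),
      (fun k => -(a k * (μ - r k)⁻¹)) ⬝ᵥ v = -((fun k => a k * (μ - r k)⁻¹) ⬝ᵥ v) := by
    intro μ v
    have : (fun k => -(a k * (μ - r k)⁻¹)) = -(fun k => a k * (μ - r k)⁻¹) := rfl
    rw [this, neg_dotProduct]
  have hwpair : ∀ (μ ν : ℂ) (v : Fin N → ℂ),
      (fun k => (ν - μ)⁻¹ * (a k * (μ - r k)⁻¹ - a k * (ν - r k)⁻¹)) ⬝ᵥ v
        = (ν - μ)⁻¹ * ((fun k => a k * (μ - r k)⁻¹) ⬝ᵥ v - (fun k => a k * (ν - r k)⁻¹) ⬝ᵥ v) := by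
    intro μ ν v
    have h1 : (fun k => (ν - μ)⁻¹ * (a k * (μ - r k)⁻¹ - a k * (ν - r k)⁻¹))
        = (ν - μ)⁻¹ • ((fun k => a k * (μ - r k)⁻¹) - (fun k => a k * (ν - r k)⁻¹)) := rfl
    rw [h1, smul_dotProduct, sub_dotProduct, smul_eq_mul]
  have hupair : ∀ (μ : ℂ) (w : Fin N → ℂ),
      w ⬝ᵥ G⁻¹ *ᵥ (fun j => ℓ j * (l j - μ))
        = w ⬝ᵥ G⁻¹ *ᵥ (fun j => l j * ℓ j) - μ * (w ⬝ᵥ G⁻¹ *ᵥ ℓ) := by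
    intro μ w
    have h1 : (fun j => ℓ j * (l j - μ)) = (fun j => l j * ℓ j) - μ • ℓ := by
      funext j; simp [Pi.sub_apply, Pi.smul_apply, smul_eq_mul]; ring
    rw [h1, Matrix.mulVec_sub, Matrix.mulVec_smul, dotProduct_sub, dotProduct_smul, smul_eq_mul]
  -- the six determinants
  have hsingle : ∀ μ : ℂ, (∀ k, μ - r k ≠ 0) →
      Omega A l r {μ} = G.det * (1 - X μ) := by
    intro μ hμ
    rw [omega_single A l r ℓ a hA μ hμ, ← hGdef, rank1_det G hG, hneg, hX]
    ring
  have hpair : ∀ μ ν : ℂ, μ ≠ ν → (∀ k, μ - r k ≠ 0) → (∀ k, ν - r k ≠ 0) →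
      Omega A l r {μ, ν} = G.det *
        ((1 + (ν - μ)⁻¹ * ((Y μ - μ * X μ) - (Y ν - μ * X ν))) * (1 - X μ)
          - ((ν - μ)⁻¹ * (X μ - X ν)) * (-(Y μ - μ * X μ))) := by
    intro μ ν hμν hμ hν
    rw [omega_pair A l r ℓ a hA μ ν hμν hμ hν, ← hGdef,
      rank2_det G hG _ _ _ _, hwpair, hwpair, hneg, hneg, hupair, hupair, hX, hY]
    ring
  rw [hsingle ξ hξr, hsingle η hηr, hsingle ζ hζr,
    hpair η ζ hηζ hηr hζr, hpair ξ η hξη hξr hηr, hpair ξ ζ (Ne.symm hζξ) hξr hζr]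
  have hηξ' : η - ξ ≠ 0 := sub_ne_zero.mpr (Ne.symm hξη)
  have hζη' : ζ - η ≠ 0 := sub_ne_zero.mpr (Ne.symm hηζ)
  have hζξ' : ζ - ξ ≠ 0 := sub_ne_zero.mpr hζξ
  field_simp
  ring

theorem stmt_19 {N : ℕ} (A : Matrix (Fin N) (Fin N) ℂ) (l r ℓ a : Fin N → ℂ) (ξ η ζ : ℂ)
    (hrank : Matrix.diagonal l * A - A * Matrix.diagonal r = Matrix.vecMulVec ℓ a)
    (hξη : ξ ≠ η) (hηζ : η ≠ ζ) (hζξ : ζ ≠ ξ)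
    (hξr : ∀ k, ξ - r k ≠ 0) (hηr : ∀ k, η - r k ≠ 0) (hζr : ∀ k, ζ - r k ≠ 0) :
    Omega A l r {ξ} * Omega A l r {η, ζ}
      = (η - ξ) / (η - ζ) * (Omega A l r {ξ, η} * Omega A l r {ζ})
        + (ζ - ξ) / (ζ - η) * (Omega A l r {ξ, ζ} * Omega A l r {η}) := by
  classical
  have hA : ∀ j k, (l j - r k) * A j k = ℓ j * a k := by
    intro j k
    have h := congrFun (congrFun hrank j) k
    simp only [Matrix.sub_apply, Matrix.diagonal_mul, Matrix.mul_diagonal,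
      Matrix.vecMulVec_apply] at h
    linear_combination h
  set D : Multiset ℂ → Matrix (Fin N) (Fin N) ℂ := fun S =>
    Matrix.diagonal (fun k => (S.map (fun s => (s - l k) * (s - r k)⁻¹)).prod) with hD
  set P : Multiset ℂ → Polynomial ℂ := fun S =>
    (1 + (Polynomial.X : Polynomial ℂ) • ((A * D S).map Polynomial.C)).det with hP
  have hPeval : ∀ (S : Multiset ℂ) (t : ℂ), (P S).eval t = Omega (t • A) l r S := by
    intro S t
    have h1 : Omega (t • A) l r S = (1 + t • (A * D S)).det := by
      rw [Omega, Matrix.smul_mul, hD]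
    have h2 : (P S).eval t
        = ((Polynomial.evalRingHom t).mapMatrix
            (1 + (Polynomial.X : Polynomial ℂ) • ((A * D S).map Polynomial.C))).det := by
      rw [hP, ← RingHom.map_det]
      rfl
    rw [h1, h2]
    congr 1
    ext i j
    simp only [RingHom.mapMatrix_apply, Matrix.map_apply, Matrix.add_apply, Matrix.smul_apply,
      Matrix.one_apply, smul_eq_mul]
    by_cases hij : i = j <;> simp [hij, Polynomial.coe_evalRingHom] <;> ring
  set q : Polynomial ℂ := P 0 with hq
  have hq0 : q.eval 0 = 1 := by
    rw [hq, hPeval 0 0]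
    simp [Omega]
  have hqne : q ≠ 0 := by
    intro h; rw [h] at hq0; simp at hq0
  have hqev : ∀ t : ℂ, q.eval t = (1 + t • A).det := by
    intro t
    rw [hq, hPeval 0 t]
    simp [Omega, hD]
  set Φ : Polynomial ℂ :=
    Polynomial.C ((η - ζ) * (ζ - η)) * (P {ξ} * P {η, ζ})
      - Polynomial.C ((η - ξ) * (ζ - η)) * (P {ξ, η} * P {ζ})
      - Polynomial.C ((ζ - ξ) * (η - ζ)) * (P {ξ, ζ} * P {η}) with hΦdef
  have hroot : ∀ t : ℂ, ¬ q.IsRoot t → Φ.IsRoot t := by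
    intro t ht
    have hGt : IsUnit (1 + t • A).det := by
      rw [← hqev t]
      exact isUnit_iff_ne_zero.mpr ht
    have hAt : ∀ j k, (l j - r k) * (t • A) j k = ℓ j * (t • a) k := by
      intro j k
      simp only [Matrix.smul_apply, Pi.smul_apply, smul_eq_mul]
      linear_combination t * hA j k
    have key := fay_generic (t • A) l r ℓ (t • a) ξ η ζ hAt hξη hηζ hζξ hξr hηr hζr hGt
    rw [Polynomial.IsRoot, hΦdef]
    simp only [Polynomial.eval_sub, Polynomial.eval_mul, Polynomial.eval_C, hPeval]
    linear_combination key
  have hΦ0 : Φ = 0 := by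
    apply Polynomial.eq_zero_of_infinite_isRoot
    apply Set.Infinite.mono _ ((Polynomial.finite_setOf_isRoot hqne).infinite_compl)
    intro t ht
    exact hroot t ht
  have h1 := congrArg (Polynomial.eval 1) hΦ0
  rw [hΦdef] at h1
  simp only [Polynomial.eval_sub, Polynomial.eval_mul, Polynomial.eval_C, hPeval,
    Polynomial.eval_zero, one_smul] at h1
  have hηζ' : η - ζ ≠ 0 := sub_ne_zero.mpr hηζ
  have hζη' : ζ - η ≠ 0 := sub_ne_zero.mpr (Ne.symm hηζ)
  simp only [Multiset.insert_eq_cons] at h1 ⊢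
  field_simp
  linear_combination h1
end
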